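/- arXiv:2601.09122 — 3 statements merged into one kernel-verified Lean document; each statement's English description precedes it below -/
import Mathlib

section
/- Lemma B.1 (uniform control of the posterior-to-Gaussian density ratio on growing balls). Let (α_n) be a positive sequence with α_n → 0 and n·α_n → ∞, and assume (A0), (A1) and (A2). Then for every η > 0 and every ε > 0 there exist an integer N = N(η,ε) and a sequence r_n → ∞ such that for every n with α_n·n > N: (1) with P_n-probability at least 1 − ε/2, π^{LAN}_{n,α_n}(h) > 0 for all h with ‖h‖₂ ≤ r_n, so that f_n(g,h) is well defined for all g, h in the closed ball of radius r_n about 0; and (2) P_n( sup_{‖g‖₂ ≤ r_n, ‖h‖₂ ≤ r_n} f_n(g,h) > η ) < ε. -/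
/-!
By (A2), in the local coordinate `h` the tempered log-likelihood ratio is, uniformly on balls
and up to an error small in probability, the quadratic `√α hᵀVΔₙ - hᵀVh/2`. Up to an
`h`-independent constant this is exactly the log of the Gaussian `φₙ`, and constants cancel in
`fₙ(g, h)`. With the prior factor controlled by continuity at `θstar`, `log (π^{LAN}/φₙ)` stays
within `η/2` of a constant on the ball, whence `fₙ ≤ 1 - e^{-η} ≤ η`. A diagonal choice over
integer radii lets the ball grow. Part (1) holds surely: the likelihood is positive, and so
is the prior near `θstar`.
-/

open MeasureTheory Filter BigOperators

noncomputable section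

/-- Multivariate Gaussian density `φ(θ | μ, S)` with mean `μ` and covariance matrix `S`. -/
def gaussDensity (p : ℕ) (μ : EuclideanSpace ℝ (Fin p))
    (S : Matrix (Fin p) (Fin p) ℝ) (θ : EuclideanSpace ℝ (Fin p)) : ℝ :=
  (2 * Real.pi) ^ (-(p : ℝ) / 2) * S.det ^ (-(1 : ℝ) / 2) *
    Real.exp (-(1 / 2) * ∑ i, ∑ j, (θ i - μ i) * S⁻¹ i j * (θ j - μ j))

/-- The tempered (`α`-)posterior density. -/
def post {p : ℕ} {Ω : Type} (L : Ω → EuclideanSpace ℝ (Fin p) → ℝ)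
    (prior : EuclideanSpace ℝ (Fin p) → ℝ) (α : ℝ) (ω : Ω)
    (θ : EuclideanSpace ℝ (Fin p)) : ℝ :=
  L ω θ ^ α * prior θ / ∫ θ', L ω θ' ^ α * prior θ'

/-- Convergence in `P n`-probability of a sequence of random vectors to a constant. -/
def TendstoInProb {Ω : ℕ → Type} [∀ n, MeasurableSpace (Ω n)]
    (P : ∀ n, Measure (Ω n)) {E : Type*} [NormedAddCommGroup E]
    (Y : ∀ n, Ω n → E) (y : E) : Prop :=
  ∀ ε : ℝ, 0 < ε →
    Tendsto (fun n => P n {ω | ε < ‖Y n ω - y‖}) atTop (nhds 0)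

/-- Assumption (A0): consistency and asymptotic normality of the MLE. -/
def A0 {p : ℕ} {Ω : ℕ → Type} [∀ n, MeasurableSpace (Ω n)] (P : ∀ n, Measure (Ω n))
    (θhat : ∀ n, Ω n → EuclideanSpace ℝ (Fin p)) (θstar : EuclideanSpace ℝ (Fin p)) : Prop :=
  TendstoInProb P θhat θstar ∧
  ∃ S : Matrix (Fin p) (Fin p) ℝ, S.IsSymm ∧ S.PosDef ∧
    ∀ f : EuclideanSpace ℝ (Fin p) → ℝ, Continuous f → (∃ C, ∀ x, |f x| ≤ C) →
      Tendsto (fun n => ∫ ω, f ((Real.sqrt n) • (θhat n ω - θstar)) ∂ P n) atTop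
        (nhds (∫ x, f x * gaussDensity p 0 S x))

/-- Assumption (A1): the prior is continuous and positive near `θstar`. -/
def A1 {p : ℕ} (prior : EuclideanSpace ℝ (Fin p) → ℝ)
    (θstar : EuclideanSpace ℝ (Fin p)) : Prop :=
  ∃ δ : ℝ, 0 < δ ∧ ContinuousOn prior (Metric.ball θstar δ) ∧
    ∀ θ ∈ Metric.ball θstar δ, 0 < prior θ

/-- Assumption (A2): tempered local asymptotic normality with matrix `V`. -/
def A2 {p : ℕ} {Ω : ℕ → Type} [∀ n, MeasurableSpace (Ω n)] (P : ∀ n, Measure (Ω n))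
    (L : ∀ n, Ω n → EuclideanSpace ℝ (Fin p) → ℝ)
    (θhat : ∀ n, Ω n → EuclideanSpace ℝ (Fin p)) (θstar : EuclideanSpace ℝ (Fin p))
    (α : ℕ → ℝ) (V : Matrix (Fin p) (Fin p) ℝ) : Prop :=
  V.IsSymm ∧ V.PosDef ∧
  ∀ r : ℝ, 0 < r → ∀ ε : ℝ, 0 < ε →
    Tendsto (fun n => P n {ω | ∃ h : EuclideanSpace ℝ (Fin p), ‖h‖ ≤ r ∧
      ε < |α n * (Real.log (L n ω (θstar + (Real.sqrt (α n * (n : ℝ)))⁻¹ • h)) -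
              Real.log (L n ω θstar))
            - Real.sqrt (α n) *
                ∑ i, ∑ j, h i * V i j * (Real.sqrt n * (θhat n ω j - θstar j))
            + (1 / 2) * ∑ i, ∑ j, h i * V i j * h j|}) atTop (nhds 0)

/-- Assumption (A3): all rescaled posterior moments are bounded in probability. -/
def A3 {p : ℕ} {Ω : ℕ → Type} [∀ n, MeasurableSpace (Ω n)] (P : ∀ n, Measure (Ω n))
    (L : ∀ n, Ω n → EuclideanSpace ℝ (Fin p) → ℝ)
    (prior : EuclideanSpace ℝ (Fin p) → ℝ) (θstar : EuclideanSpace ℝ (Fin p))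
    (α : ℕ → ℝ) : Prop :=
  ∀ ε : ℝ, 0 < ε → ∀ k₀ : ℝ, 0 ≤ k₀ → ∃ M : ℝ, ∃ N : ℕ, ∀ n : ℕ,
    (N : ℝ) ≤ α n * n →
    P n {ω | M < ∫ θ, ‖Real.sqrt (α n * (n : ℝ)) • (θ - θstar)‖ ^ k₀ *
        post (L n) prior (α n) ω θ} < ENNReal.ofReal ε

/-- Conditions 1 and 2 (with a common radius `r`): salience of the pseudo-true parameter
and local quadratic behavior of the log-likelihood near the MLE. -/
def Conds12 {p : ℕ} {Ω : ℕ → Type} [∀ n, MeasurableSpace (Ω n)] (P : ∀ n, Measure (Ω n))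
    (L : ∀ n, Ω n → EuclideanSpace ℝ (Fin p) → ℝ)
    (θhat : ∀ n, Ω n → EuclideanSpace ℝ (Fin p))
    (θstar : EuclideanSpace ℝ (Fin p)) : Prop :=
  ∃ Lc c₀ c₁ c₂ r : ℝ, ∃ γfun : ℝ → ℝ,
    0 < Lc ∧ 0 < c₀ ∧ 0 < c₁ ∧ 0 ≤ c₂ ∧ Real.exp (c₂ / c₀) / c₁ < r ∧
    (∀ v : ℝ, 0 ≤ v → 0 ≤ γfun v) ∧
    (∀ v : ℝ, r ≤ v → c₀ * Real.log (1 + c₁ * v) - c₂ ≤ γfun v) ∧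
    Tendsto (fun n => P n {ω | ∀ θ, r ≤ ‖θ - θstar‖ →
        Real.log (L n ω θ) - Real.log (L n ω θstar) ≤
          -(Lc * (n : ℝ) * γfun ‖θ - θstar‖)}) atTop (nhds 1) ∧
    ∃ c₃ c₄ : ℝ, 0 < c₃ ∧ 0 < c₄ ∧
      Tendsto (fun n => P n {ω | ∀ θ, ‖θ - θhat n ω‖ < 2 * r →
          -((n : ℝ) * c₃ * ‖θ - θhat n ω‖ ^ 2) ≤
              Real.log (L n ω θ) - Real.log (L n ω (θhat n ω)) ∧
            Real.log (L n ω θ) - Real.log (L n ω (θhat n ω)) ≤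
              -((n : ℝ) * c₄ * ‖θ - θhat n ω‖ ^ 2)}) atTop (nhds 1)


/-- Assumption (A1'): the prior is positive and C² near `θstar`, with finite mean. -/
def A1' {p : ℕ} (prior : EuclideanSpace ℝ (Fin p) → ℝ)
    (θstar : EuclideanSpace ℝ (Fin p)) : Prop :=
  (∃ δ : ℝ, 0 < δ ∧ (∀ θ ∈ Metric.ball θstar δ, 0 < prior θ) ∧
    ContDiffOn ℝ 2 prior (Metric.ball θstar δ)) ∧
  Integrable (fun θ : EuclideanSpace ℝ (Fin p) => ‖θ‖ * prior θ)

/-- Assumption (A2'): higher-order tempered LAN centered at the MLE, with data `H` and `S`. -/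
def A2' {p : ℕ} {Ω : ℕ → Type} [∀ n, MeasurableSpace (Ω n)] (P : ∀ n, Measure (Ω n))
    (L : ∀ n, Ω n → EuclideanSpace ℝ (Fin p) → ℝ)
    (θhat : ∀ n, Ω n → EuclideanSpace ℝ (Fin p)) (α : ℕ → ℝ)
    (H : ∀ n, Ω n → Matrix (Fin p) (Fin p) ℝ)
    (S : ∀ n, Ω n → Fin p → Fin p → Fin p → ℝ) : Prop :=
  Tendsto (fun n => P n {ω | (H n ω).IsSymm ∧ (H n ω).PosDef}) atTop (nhds 1) ∧
  ∃ M : ℝ, ∃ δ : ℝ, 0 < δ ∧ ∀ ε : ℝ, 0 < ε → ∃ N : ℕ, ∀ n ≥ N,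
    P n {ω | ∃ h : EuclideanSpace ℝ (Fin p), ‖h‖ ≤ δ * Real.sqrt (α n * (n : ℝ)) ∧
      (M / (α n * (n : ℝ))) * ‖h‖ ^ 4 <
        α n * (Real.log (L n ω (θhat n ω + (Real.sqrt (α n * (n : ℝ)))⁻¹ • h)) -
            Real.log (L n ω (θhat n ω)))
          + (1 / 2) * ∑ i, ∑ j, h i * H n ω i j * h j
          - (6 * Real.sqrt (α n * (n : ℝ)))⁻¹ *
              ∑ i, ∑ j, ∑ k, S n ω i j k * h i * h j * h k} < ENNReal.ofReal ε

/-- Assumption (A3'): salience of the MLE. -/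
def A3' {p : ℕ} {Ω : ℕ → Type} [∀ n, MeasurableSpace (Ω n)] (P : ∀ n, Measure (Ω n))
    (L : ∀ n, Ω n → EuclideanSpace ℝ (Fin p) → ℝ)
    (θhat : ∀ n, Ω n → EuclideanSpace ℝ (Fin p)) : Prop :=
  ∀ ε : ℝ, 0 < ε → ∀ δ' : ℝ, 0 < δ' → ∃ c : ℝ, 0 < c ∧ ∃ N : ℕ, ∀ n ≥ N,
    P n {ω | ∃ θ, δ' ≤ ‖θ - θhat n ω‖ ∧
      -c < (n : ℝ)⁻¹ * (Real.log (L n ω θ) - Real.log (L n ω (θhat n ω)))}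
      < ENNReal.ofReal ε

/-- Condition (ALap) for the function `b` in the Laplace approximation. -/
def ALap {p : ℕ} {Ω : ℕ → Type} [∀ n, MeasurableSpace (Ω n)] (P : ∀ n, Measure (Ω n))
    (θhat : ∀ n, Ω n → EuclideanSpace ℝ (Fin p)) (θstar : EuclideanSpace ℝ (Fin p))
    (α : ℕ → ℝ) (b : EuclideanSpace ℝ (Fin p) → ℝ) : Prop :=
  Integrable b ∧
  (∃ δ : ℝ, 0 < δ ∧ ∃ C : ℝ, ∀ θ ∈ Metric.ball θstar δ, |b θ| ≤ C) ∧
  ∃ v : ∀ n, Ω n → EuclideanSpace ℝ (Fin p), ∃ M : ℝ, ∃ δ : ℝ, 0 < δ ∧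
    ∀ ε : ℝ, 0 < ε → ∃ N : ℕ, ∀ n ≥ N,
      P n {ω | ∃ h : EuclideanSpace ℝ (Fin p), ‖h‖ ≤ δ * Real.sqrt (α n * (n : ℝ)) ∧
        (∑ i, v n ω i * h i) / Real.sqrt (α n * (n : ℝ)) + (M / (α n * (n : ℝ))) * ‖h‖ ^ 2 <
          b (θhat n ω + (Real.sqrt (α n * (n : ℝ)))⁻¹ • h) - b (θhat n ω)}
        < ENNReal.ofReal ε

/-- The posterior mean as a vector in Euclidean space. -/
def postMean {p : ℕ} {Ω : Type} (L : Ω → EuclideanSpace ℝ (Fin p) → ℝ)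
    (prior : EuclideanSpace ℝ (Fin p) → ℝ) (α : ℝ) (ω : Ω) :
    EuclideanSpace ℝ (Fin p) :=
  (WithLp.equiv 2 (Fin p → ℝ)).symm (fun j => ∫ θ, θ j * post L prior α ω θ)

/-- A coupling of two measures. -/
def IsCoupling {X : Type} [MeasurableSpace X] (μ ν : Measure X)
    (γ : Measure (X × X)) : Prop :=
  IsProbabilityMeasure γ ∧ γ.map Prod.fst = μ ∧ γ.map Prod.snd = ν

/-- The `s`-Wasserstein distance. -/
def wassersteinDist {X : Type} [MeasurableSpace X] [PseudoMetricSpace X]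
    (s : ℝ) (μ ν : Measure X) : ℝ :=
  sInf {c : ℝ | ∃ γ : Measure (X × X), IsCoupling μ ν γ ∧
    c = (∫ x : X × X, dist x.1 x.2 ^ s ∂γ) ^ (1 / s)}

/-- The total variation distance between two measures. -/
def tvDist {X : Type} [MeasurableSpace X] (μ ν : Measure X) : ℝ :=
  sSup {x : ℝ | ∃ A : Set X, MeasurableSet A ∧ x = |(μ A).toReal - (ν A).toReal|}

/-- Standard basis vector of Euclidean space. -/
def basisE (p : ℕ) (i : Fin p) : EuclideanSpace ℝ (Fin p) :=
  EuclideanSpace.single i (1 : ℝ)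

/-- First directional partial derivative. -/
def d1 {p : ℕ} (g : EuclideanSpace ℝ (Fin p) → ℝ) (θ : EuclideanSpace ℝ (Fin p))
    (i : Fin p) : ℝ :=
  fderiv ℝ g θ (basisE p i)

/-- Second-order partial derivative. -/
def d2 {p : ℕ} (g : EuclideanSpace ℝ (Fin p) → ℝ) (θ : EuclideanSpace ℝ (Fin p))
    (i j : Fin p) : ℝ :=
  fderiv ℝ (fun θ' => d1 g θ' j) θ (basisE p i)

/-- Third-order partial derivative. -/
def d3 {p : ℕ} (g : EuclideanSpace ℝ (Fin p) → ℝ) (θ : EuclideanSpace ℝ (Fin p))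
    (i j k : Fin p) : ℝ :=
  fderiv ℝ (fun θ' => d2 g θ' j k) θ (basisE p i)

/-- Fourth-order partial derivative. -/
def d4 {p : ℕ} (g : EuclideanSpace ℝ (Fin p) → ℝ) (θ : EuclideanSpace ℝ (Fin p))
    (i j k l : Fin p) : ℝ :=
  fderiv ℝ (fun θ' => d3 g θ' j k l) θ (basisE p i)

open Real Topology

theorem exists_tendsto_atTop_eventually_diagonal {Q : ℕ → ℕ → Prop}
    (hQ : ∀ k, ∀ᶠ n in atTop, Q k n) :
    ∃ c : ℕ → ℕ, Tendsto c atTop atTop ∧ ∀ᶠ n in atTop, Q (c n) n := by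
  classical
  choose N hN using fun k => eventually_atTop.1 (hQ k)
  refine ⟨fun n => Nat.findGreatest (fun k => max (N k) k ≤ n) n, ?_, ?_⟩
  · refine tendsto_atTop_atTop.2 fun k => ⟨max (N k) k, fun n hn => ?_⟩
    exact Nat.le_findGreatest ((le_max_right _ _).trans hn) hn
  · filter_upwards [eventually_ge_atTop (max (N 0) 0)] with n hn
    exact hN _ _ (le_of_max_le_left
      (Nat.findGreatest_spec (P := fun k => max (N k) k ≤ n) (Nat.zero_le n) hn))

theorem exists_nat_forall_of_eventually_atTop {Q : ℕ → Prop} (hQ : ∀ᶠ n in atTop, Q n)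
    (a : ℕ → ℝ) : ∃ N : ℕ, ∀ n, (N : ℝ) < a n → Q n := by
  obtain ⟨n₀, hn₀⟩ := eventually_atTop.1 hQ
  refine ⟨(Finset.range n₀).sup fun m => ⌈a m⌉₊, fun n hn => hn₀ n ?_⟩
  by_contra! hlt
  exact hn.not_ge ((Nat.le_ceil _).trans
    (Nat.cast_le.2 (Finset.le_sup (f := fun m => ⌈a m⌉₊) (Finset.mem_range.2 hlt))))

theorem add_inv_smul_mem_closedBall {E : Type*} [NormedAddCommGroup E] [NormedSpace ℝ E]
    {θ x : E} {t δ : ℝ} (ht : 0 < t) (hx : ‖x‖ ≤ δ * t) :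
    θ + t⁻¹ • x ∈ Metric.closedBall θ δ := by
  rw [Metric.mem_closedBall, dist_eq_norm, add_sub_cancel_left, norm_smul,
    Real.norm_of_nonneg (inv_nonneg.2 ht.le), inv_mul_le_iff₀ ht, mul_comm]
  exact hx

theorem Matrix.IsSymm.sum_sub_mul_sub {ι : Type*} [Fintype ι] {V : Matrix ι ι ℝ}
    (hV : V.IsSymm) (x y : ι → ℝ) :
    ∑ i, ∑ j, (x i - y i) * V i j * (x j - y j) =
      ∑ i, ∑ j, x i * V i j * x j - 2 * ∑ i, ∑ j, x i * V i j * y j +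
        ∑ i, ∑ j, y i * V i j * y j := by
  have hswap : ∑ i, ∑ j, y i * V i j * x j = ∑ i, ∑ j, x i * V i j * y j := by
    rw [Finset.sum_comm]
    exact Finset.sum_congr rfl fun i _ => Finset.sum_congr rfl fun j _ => by
      rw [hV.apply j i]; ring
  simp only [sub_mul, mul_sub, Finset.sum_sub_distrib]
  rw [hswap]
  ring

/-- The paper's `f_n(g, h)`, for a density `ρ` and its Gaussian approximation `φ`. -/
def densityRatioGap {E : Type*} (φ ρ : E → ℝ) (g h : E) : ℝ :=
  max 0 (1 - φ h * ρ g / (ρ h * φ g))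

theorem densityRatioGap_le {E : Type*} {φ ρ : E → ℝ} {g h : E} {κ η : ℝ}
    (hφg : 0 < φ g) (hφh : 0 < φ h) (hρg : 0 < ρ g) (hρh : 0 < ρ h)
    (hg : |log (ρ g / φ g) - κ| ≤ η / 2) (hh : |log (ρ h / φ h) - κ| ≤ η / 2) :
    densityRatioGap φ ρ g h ≤ η := by
  have hratio : φ h * ρ g / (ρ h * φ g) = exp (log (ρ g / φ g) - log (ρ h / φ h)) := by
    rw [exp_sub, exp_log (by positivity), exp_log (by positivity)]
    field_simp
  have hexp : -η ≤ log (ρ g / φ g) - log (ρ h / φ h) := by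
    linarith [abs_le.1 hg, abs_le.1 hh]
  refine max_le (by linarith [abs_nonneg (log (ρ g / φ g) - κ)]) ?_
  rw [hratio]
  linarith [add_one_le_exp (-η), exp_le_exp.2 hexp]

section

variable {p : ℕ}

theorem A1.exists_closedBall_abs_log_sub_lt {prior : EuclideanSpace ℝ (Fin p) → ℝ}
    {θstar : EuclideanSpace ℝ (Fin p)} (hA1 : A1 prior θstar) {s : ℝ} (hs : 0 < s) :
    ∃ δ > 0, ∀ θ ∈ Metric.closedBall θstar δ,
      0 < prior θ ∧ |log (prior θ) - log (prior θstar)| < s := by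
  obtain ⟨δ, hδ, hcont, hpos⟩ := hA1
  have hball : Metric.ball θstar δ ∈ 𝓝 θstar := Metric.ball_mem_nhds _ hδ
  have hlog : ContinuousAt (fun θ => log (prior θ)) θstar :=
    (continuousAt_log (hpos _ (Metric.mem_ball_self hδ)).ne').comp
      (hcont.continuousAt hball)
  have hclose : ∀ᶠ θ in 𝓝 θstar, |log (prior θ) - log (prior θstar)| < s := by
    simpa only [Real.dist_eq] using Metric.tendsto_nhds.1 hlog s hs
  exact Metric.nhds_basis_closedBall.eventually_iff.1 ((eventually_of_mem hball hpos).and hclose)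

theorem gaussDensity_pos {μ : EuclideanSpace ℝ (Fin p)} {S : Matrix (Fin p) (Fin p) ℝ}
    (hS : 0 < S.det) (θ : EuclideanSpace ℝ (Fin p)) : 0 < gaussDensity p μ S θ := by
  unfold gaussDensity
  have := rpow_pos_of_pos hS (-(1 : ℝ) / 2)
  positivity

theorem log_gaussDensity {μ : EuclideanSpace ℝ (Fin p)} {S : Matrix (Fin p) (Fin p) ℝ}
    (hS : 0 < S.det) (θ : EuclideanSpace ℝ (Fin p)) :
    log (gaussDensity p μ S θ) =
      log ((2 * π) ^ (-(p : ℝ) / 2) * S.det ^ (-(1 : ℝ) / 2)) -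
        (1 / 2) * ∑ i, ∑ j, (θ i - μ i) * S⁻¹ i j * (θ j - μ j) := by
  have := rpow_pos_of_pos hS (-(1 : ℝ) / 2)
  rw [gaussDensity, log_mul (by positivity) (exp_pos _).ne', log_exp]
  ring

variable {Ω : Type} (L : Ω → EuclideanSpace ℝ (Fin p) → ℝ)
  (prior : EuclideanSpace ℝ (Fin p) → ℝ)

/-- The rescaled `α`-posterior `π^{LAN}_{n,α}` of the local parameter `h = √(α n) (θ - θstar)`. -/
def rescaledPost (θstar : EuclideanSpace ℝ (Fin p)) (α : ℝ) (n : ℕ) (ω : Ω)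
    (h : EuclideanSpace ℝ (Fin p)) : ℝ :=
  (α * n) ^ (-(p : ℝ) / 2) * post L prior α ω (θstar + (√(α * n))⁻¹ • h)

/-- The remainder `R_n(h)` of the tempered LAN expansion (A2), for the likelihood `ℓ = L n ω`. -/
def lanRemainder (ℓ : EuclideanSpace ℝ (Fin p) → ℝ) (θhat θstar : EuclideanSpace ℝ (Fin p))
    (V : Matrix (Fin p) (Fin p) ℝ) (α : ℝ) (n : ℕ) (h : EuclideanSpace ℝ (Fin p)) : ℝ :=
  α * (log (ℓ (θstar + (√(α * n))⁻¹ • h)) - log (ℓ θstar))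
    - √α * ∑ i, ∑ j, h i * V i j * (√n * (θhat j - θstar j))
    + (1 / 2) * ∑ i, ∑ j, h i * V i j * h j

variable {L prior} {θhat θstar : EuclideanSpace ℝ (Fin p)} {V : Matrix (Fin p) (Fin p) ℝ}
  {α : ℝ} {n : ℕ} {ω : Ω}

theorem post_pos {θ : EuclideanSpace ℝ (Fin p)} (hL : 0 < L ω θ) (hprior : 0 < prior θ)
    (hZ : 0 < ∫ θ', L ω θ' ^ α * prior θ') : 0 < post L prior α ω θ := by
  have := rpow_pos_of_pos hL α
  unfold post
  positivity

theorem log_post {θ : EuclideanSpace ℝ (Fin p)} (hL : 0 < L ω θ) (hprior : 0 < prior θ)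
    (hZ : 0 < ∫ θ', L ω θ' ^ α * prior θ') :
    log (post L prior α ω θ) =
      α * log (L ω θ) + log (prior θ) - log (∫ θ', L ω θ' ^ α * prior θ') := by
  have := rpow_pos_of_pos hL α
  rw [post, log_div (by positivity) hZ.ne', log_mul this.ne' hprior.ne', log_rpow hL]

theorem rescaledPost_pos {x : EuclideanSpace ℝ (Fin p)} (hαn : 0 < α * n) (hL : ∀ θ, 0 < L ω θ)
    (hprior : 0 < prior (θstar + (√(α * n))⁻¹ • x)) (hZ : 0 < ∫ θ, L ω θ ^ α * prior θ) :
    0 < rescaledPost L prior θstar α n ω x :=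
  mul_pos (rpow_pos_of_pos hαn _) (post_pos (hL _) hprior hZ)

/-- The cross term of the Gaussian exponent cancels the score term `√α hᵀVΔₙ` of (A2). -/
theorem exists_log_rescaledPost_div_gaussDensity_eq (hVs : V.IsSymm) (hVpd : V.PosDef)
    (hαn : 0 < α * n) (hL : ∀ θ, 0 < L ω θ) (hZ : 0 < ∫ θ, L ω θ ^ α * prior θ) :
    ∃ κ, ∀ x, 0 < prior (θstar + (√(α * n))⁻¹ • x) →
      log (rescaledPost L prior θstar α n ω x /
          gaussDensity p (√(α * n) • (θhat - θstar)) V⁻¹ x) =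
        κ + lanRemainder (L ω) θhat θstar V α n x + log (prior (θstar + (√(α * n))⁻¹ • x)) := by
  set μ := √(α * n) • (θhat - θstar)
  have hdet : 0 < V⁻¹.det := hVpd.inv.det_pos
  have hVV : V⁻¹⁻¹ = V := V.nonsing_inv_nonsing_inv (isUnit_iff_ne_zero.2 hVpd.det_pos.ne')
  have hcross : ∀ x : EuclideanSpace ℝ (Fin p), ∑ i, ∑ j, x i * V i j * μ j =
      √α * ∑ i, ∑ j, x i * V i j * (√n * (θhat j - θstar j)) := fun x => by
    simp only [μ, PiLp.smul_apply, PiLp.sub_apply, smul_eq_mul, sqrt_mul' α (Nat.cast_nonneg n),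
      Finset.mul_sum]
    exact Finset.sum_congr rfl fun i _ => Finset.sum_congr rfl fun j _ => by ring
  refine ⟨log ((α * n) ^ (-(p : ℝ) / 2)) - log (∫ θ, L ω θ ^ α * prior θ) +
      α * log (L ω θstar) - log ((2 * π) ^ (-(p : ℝ) / 2) * V⁻¹.det ^ (-(1 : ℝ) / 2)) +
      (1 / 2) * ∑ i, ∑ j, μ i * V i j * μ j, fun x hx => ?_⟩
  rw [log_div (rescaledPost_pos hαn hL hx hZ).ne' (gaussDensity_pos hdet x).ne', rescaledPost,
    log_mul (rpow_pos_of_pos hαn _).ne' (post_pos (hL _) hx hZ).ne', log_post (hL _) hx hZ,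
    log_gaussDensity hdet, hVV, hVs.sum_sub_mul_sub x μ, hcross, lanRemainder]
  ring

theorem densityRatioGap_le_of_abs_lanRemainder_le (hVs : V.IsSymm) (hVpd : V.PosDef)
    (hαn : 0 < α * n) (hL : ∀ θ, 0 < L ω θ) (hZ : 0 < ∫ θ, L ω θ ^ α * prior θ) {r η : ℝ}
    (hprior : ∀ x : EuclideanSpace ℝ (Fin p), ‖x‖ ≤ r →
      0 < prior (θstar + (√(α * n))⁻¹ • x) ∧
        |log (prior (θstar + (√(α * n))⁻¹ • x)) - log (prior θstar)| < η / 4)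
    (hR : ∀ x, ‖x‖ ≤ r → |lanRemainder (L ω) θhat θstar V α n x| ≤ η / 4)
    {g h : EuclideanSpace ℝ (Fin p)} (hg : ‖g‖ ≤ r) (hh : ‖h‖ ≤ r) :
    densityRatioGap (gaussDensity p (√(α * n) • (θhat - θstar)) V⁻¹)
      (rescaledPost L prior θstar α n ω) g h ≤ η := by
  obtain ⟨κ, hκ⟩ := exists_log_rescaledPost_div_gaussDensity_eq (θhat := θhat) hVs hVpd hαn hL hZ
  have hdet : 0 < V⁻¹.det := hVpd.inv.det_pos
  have hclose : ∀ x, ‖x‖ ≤ r → |log (rescaledPost L prior θstar α n ω x /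
      gaussDensity p (√(α * n) • (θhat - θstar)) V⁻¹ x) - (κ + log (prior θstar))| ≤ η / 2 := by
    intro x hx
    obtain ⟨hpos, hlog⟩ := hprior x hx
    rw [hκ x hpos]
    have hRx := abs_le.1 (hR x hx)
    have hlogx := abs_lt.1 hlog
    exact abs_le.2 ⟨by linarith, by linarith⟩
  exact densityRatioGap_le (gaussDensity_pos hdet g) (gaussDensity_pos hdet h)
    (rescaledPost_pos hαn hL (hprior g hg).1 hZ) (rescaledPost_pos hαn hL (hprior h hh).1 hZ)
    (hclose g hg) (hclose h hh)

end

theorem density_ratio_control_on_growing_balls_general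
    {p : ℕ} {Ω : ℕ → Type} [∀ n, MeasurableSpace (Ω n)]
    (P : ∀ n, Measure (Ω n)) [∀ n, IsProbabilityMeasure (P n)]
    (L : ∀ n, Ω n → EuclideanSpace ℝ (Fin p) → ℝ)
    (prior : EuclideanSpace ℝ (Fin p) → ℝ)
    (θhat : ∀ n, Ω n → EuclideanSpace ℝ (Fin p))
    (θstar : EuclideanSpace ℝ (Fin p))
    (V : Matrix (Fin p) (Fin p) ℝ)
    (α : ℕ → ℝ)
    -- basic regularity of the model
    (hLpos : ∀ n ω θ, 0 < L n ω θ)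
    (hZ : ∀ n ω, Integrable (fun θ => L n ω θ ^ (α n) * prior θ) ∧
        0 < ∫ θ, L n ω θ ^ (α n) * prior θ)
    -- tempering sequence: `α n → 0` and `n * α n → ∞`
    (hαn : Tendsto (fun n => α n * (n : ℝ)) atTop atTop)
    -- assumptions (A0)-(A2)
    (hA1 : A1 prior θstar)
    (hA2 : A2 P L θhat θstar α V) :
    ∀ η : ℝ, 0 < η → ∀ ε : ℝ, 0 < ε → ∃ N : ℕ, ∃ r : ℕ → ℝ,
      Tendsto r atTop atTop ∧
      ∀ n : ℕ, (N : ℝ) < α n * n →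
        -- (1) the rescaled posterior density is positive on the ball of radius `r n`
        --     with probability at least `1 - ε/2`, so `f n (g, h)` is well defined there
        (ENNReal.ofReal (1 - ε / 2) ≤
          P n {ω | ∀ h : EuclideanSpace ℝ (Fin p), ‖h‖ ≤ r n →
            0 < (α n * (n : ℝ)) ^ (-(p : ℝ) / 2) *
              post (L n) prior (α n) ω (θstar + (Real.sqrt (α n * (n : ℝ)))⁻¹ • h)}) ∧
        -- (2) the density-ratio functional is uniformly small on the ball
        P n {ω | ∃ g h : EuclideanSpace ℝ (Fin p), ‖g‖ ≤ r n ∧ ‖h‖ ≤ r n ∧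
          η < max 0 (1 -
            (gaussDensity p (Real.sqrt (α n * (n : ℝ)) • (θhat n ω - θstar)) V⁻¹ h *
              ((α n * (n : ℝ)) ^ (-(p : ℝ) / 2) *
                post (L n) prior (α n) ω (θstar + (Real.sqrt (α n * (n : ℝ)))⁻¹ • g))) /
            (((α n * (n : ℝ)) ^ (-(p : ℝ) / 2) *
                post (L n) prior (α n) ω (θstar + (Real.sqrt (α n * (n : ℝ)))⁻¹ • h)) *
              gaussDensity p (Real.sqrt (α n * (n : ℝ)) • (θhat n ω - θstar)) V⁻¹ g))}
          < ENNReal.ofReal ε := by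
  intro η hη ε hε
  obtain ⟨hVs, hVpd, hR⟩ := hA2
  obtain ⟨δ, hδ, hprior⟩ := hA1.exists_closedBall_abs_log_sub_lt (by positivity : 0 < η / 4)
  -- the radius `c n` is a diagonal choice: (A2) at radius `k + 1` kicks in, and the rescaled
  -- ball of radius `k` fits in the `δ`-ball around `θstar`
  obtain ⟨c, hc, hgood⟩ := exists_tendsto_atTop_eventually_diagonal fun k : ℕ =>
    ((hR (k + 1) (by positivity) (η / 4) (by positivity)).eventually_lt_const
      (ENNReal.ofReal_pos.2 hε)).and
    (((tendsto_sqrt_atTop.comp hαn).const_mul_atTop hδ).eventually_ge_atTop (k : ℝ))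
  obtain ⟨N, hN⟩ := exists_nat_forall_of_eventually_atTop hgood fun n => α n * n
  refine ⟨N, fun n => c n, tendsto_natCast_atTop_atTop.comp hc, fun n hn => ?_⟩
  obtain ⟨hbad, hcδ⟩ := hN n hn
  have hαn' : 0 < α n * n := N.cast_nonneg.trans_lt hn
  have hprior' : ∀ x : EuclideanSpace ℝ (Fin p), ‖x‖ ≤ c n → _ := fun x hx =>
    hprior _ (add_inv_smul_mem_closedBall (sqrt_pos.2 hαn') (hx.trans hcδ))
  refine ⟨?_, lt_of_le_of_lt (measure_mono fun ω hω => ?_) hbad⟩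
  · refine (ENNReal.ofReal_le_one.2 (by linarith)).trans ?_
    rw [← measure_univ (μ := P n)]
    exact measure_mono fun ω _ h hh =>
      rescaledPost_pos hαn' (hLpos n ω) (hprior' h hh).1 (hZ n ω).2
  · obtain ⟨g, h, hg, hh, hgap⟩ := hω
    by_contra hsmall
    exact hgap.not_ge (densityRatioGap_le_of_abs_lanRemainder_le hVs hVpd hαn' (hLpos n ω)
      (hZ n ω).2 hprior' (fun x hx => not_lt.1 fun hlt => hsmall ⟨x, by linarith, hlt⟩) hg hh)

/-- **Lemma B.1** (uniform control of the posterior-to-Gaussian density ratio on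
growing balls). -/
theorem density_ratio_control_on_growing_balls
    {p : ℕ} {Ω : ℕ → Type} [∀ n, MeasurableSpace (Ω n)]
    (P : ∀ n, Measure (Ω n)) [∀ n, IsProbabilityMeasure (P n)]
    (L : ∀ n, Ω n → EuclideanSpace ℝ (Fin p) → ℝ)
    (prior : EuclideanSpace ℝ (Fin p) → ℝ)
    (θhat : ∀ n, Ω n → EuclideanSpace ℝ (Fin p))
    (θstar : EuclideanSpace ℝ (Fin p))
    (V : Matrix (Fin p) (Fin p) ℝ)
    (α : ℕ → ℝ)
    -- basic regularity of the model
    (hLmeas : ∀ n, Measurable (Function.uncurry (L n)))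
    (hLpos : ∀ n ω θ, 0 < L n ω θ)
    (hpriormeas : Measurable prior)
    (hpriornn : ∀ θ, 0 ≤ prior θ)
    (hpriorint : ∫ θ, prior θ = 1)
    (hθmeas : ∀ n, Measurable (θhat n))
    (hMLE : ∀ n ω θ, θ ≠ θhat n ω → L n ω θ < L n ω (θhat n ω))
    (hZ : ∀ n ω, Integrable (fun θ => L n ω θ ^ (α n) * prior θ) ∧
        0 < ∫ θ, L n ω θ ^ (α n) * prior θ)
    -- tempering sequence: `α n → 0` and `n * α n → ∞`
    (hαpos : ∀ n, 0 < α n)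
    (hα0 : Tendsto α atTop (nhds 0))
    (hαn : Tendsto (fun n => α n * (n : ℝ)) atTop atTop)
    -- assumptions (A0)-(A2)
    (hA0 : A0 P θhat θstar)
    (hA1 : A1 prior θstar)
    (hA2 : A2 P L θhat θstar α V) :
    ∀ η : ℝ, 0 < η → ∀ ε : ℝ, 0 < ε → ∃ N : ℕ, ∃ r : ℕ → ℝ,
      Tendsto r atTop atTop ∧
      ∀ n : ℕ, (N : ℝ) < α n * n →
        -- (1) the rescaled posterior density is positive on the ball of radius `r n`
        --     with probability at least `1 - ε/2`, so `f n (g, h)` is well defined there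
        (ENNReal.ofReal (1 - ε / 2) ≤
          P n {ω | ∀ h : EuclideanSpace ℝ (Fin p), ‖h‖ ≤ r n →
            0 < (α n * (n : ℝ)) ^ (-(p : ℝ) / 2) *
              post (L n) prior (α n) ω (θstar + (Real.sqrt (α n * (n : ℝ)))⁻¹ • h)}) ∧
        -- (2) the density-ratio functional is uniformly small on the ball
        P n {ω | ∃ g h : EuclideanSpace ℝ (Fin p), ‖g‖ ≤ r n ∧ ‖h‖ ≤ r n ∧
          η < max 0 (1 -
            (gaussDensity p (Real.sqrt (α n * (n : ℝ)) • (θhat n ω - θstar)) V⁻¹ h *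
              ((α n * (n : ℝ)) ^ (-(p : ℝ) / 2) *
                post (L n) prior (α n) ω (θstar + (Real.sqrt (α n * (n : ℝ)))⁻¹ • g))) /
            (((α n * (n : ℝ)) ^ (-(p : ℝ) / 2) *
                post (L n) prior (α n) ω (θstar + (Real.sqrt (α n * (n : ℝ)))⁻¹ • h)) *
              gaussDensity p (Real.sqrt (α n * (n : ℝ)) • (θhat n ω - θstar)) V⁻¹ g))}
          < ENNReal.ofReal ε :=
  density_ratio_control_on_growing_balls_general P L prior θhat θstar V α hLpos hZ hαn hA1 hA2
end
end

section
/- Lemma C.1 (Wasserstein distance bounded via total variation and moments). Let (X,d) be a Polish metric space, fix reals s ≥ 1 and m > s, a point x₀ ∈ X, and Borel probability measures μ, ν on X with ∫ d(x,x₀)^m dμ(x) < ∞ and ∫ d(y,x₀)^m dν(y) < ∞. Set δ := d_TV(μ,ν) and M_m := ∫ d(x,x₀)^m dμ(x) + ∫ d(y,x₀)^m dν(y). Then there exists a coupling γ of (μ,ν) such that (∫_{X×X} d(x,y)^s dγ(x,y))^{1/s} ≤ 2^{1+1/s}·M_m^{1/m}·δ^{1/s − 1/m}; in particular, d_{W_s}(μ,ν)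 ≤ 2^{1+1/s}·M_m^{1/m}·δ^{1/s − 1/m}. -/
open MeasureTheory Filter BigOperators

noncomputable section

/-! Write `μ = λ + (μ - ν)` and `ν = λ + (ν - μ)`, where the excesses `μ - ν` and `ν - μ` are
mutually singular (Hahn decomposition) and have the same mass `c ≤ d_TV(μ, ν)`. Keep `λ` on the
diagonal and couple the excesses independently, normalised by `c`; only the excesses cost anything.
Since `d(x, y) ≤ d(x, x₀) + d(y, x₀)`, Minkowski's inequality bounds the `Lˢ` cost by
`‖d(·, x₀)‖_{Lˢ(μ - ν)} + ‖d(·, x₀)‖_{Lˢ(ν - μ)}`, and Hölder's inequality on measures of mass `c`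
bounds each term by the `Lᵐ` moment times `c ^ (1/s - 1/m)`. -/

open scoped ENNReal
open Set MeasureTheory.Measure

namespace MeasureTheory

variable {X : Type*} [MeasurableSpace X] {μ ν : Measure X} {s : Set X}

lemma Measure.sub_sub_cancel_of_le [IsFiniteMeasure μ] (h : ν ≤ μ) : μ - (μ - ν) = ν := by
  have : IsFiniteMeasure ν := isFiniteMeasure_of_le μ h
  calc μ - (μ - ν) = ν + (μ - ν) - (μ - ν) := by rw [add_comm, sub_add_cancel_of_le h]
    _ = ν := Measure.add_sub_cancel

lemma IsHahnDecomposition.restrict_sub_sub_self (hs : IsHahnDecomposition μ ν s) :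
    (μ - (μ - ν)).restrict s = μ.restrict s := by
  rw [restrict_sub_eq_restrict_sub_restrict hs.measurableSet,
    restrict_sub_eq_restrict_sub_restrict hs.measurableSet, sub_eq_zero_of_le hs.le_on,
    Measure.sub_zero]

lemma IsHahnDecomposition.restrict_sub_sub_self' [IsFiniteMeasure ν]
    (hs : IsHahnDecomposition μ ν s) : (ν - (ν - μ)).restrict s = μ.restrict s := by
  rw [restrict_sub_eq_restrict_sub_restrict hs.measurableSet,
    restrict_sub_eq_restrict_sub_restrict hs.measurableSet, sub_sub_cancel_of_le hs.le_on]

lemma Measure.sub_sub_self_comm [IsFiniteMeasure μ] [IsFiniteMeasure ν] :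
    μ - (μ - ν) = ν - (ν - μ) := by
  obtain ⟨s, hs⟩ := exists_isHahnDecomposition μ ν
  rw [← restrict_add_restrict_compl (μ := μ - (μ - ν)) hs.measurableSet,
    ← restrict_add_restrict_compl (μ := ν - (ν - μ)) hs.measurableSet,
    hs.restrict_sub_sub_self, hs.restrict_sub_sub_self', hs.compl.restrict_sub_sub_self,
    hs.compl.restrict_sub_sub_self']

lemma Measure.sub_apply_univ_comm [IsFiniteMeasure μ] [IsFiniteMeasure ν] (h : μ univ = ν univ) :
    (μ - ν) univ = (ν - μ) univ := by
  have hμ := congrArg (· univ) (sub_add_cancel_of_le (sub_le (μ := μ) (ν := ν)))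
  have hν := congrArg (· univ) (sub_add_cancel_of_le (sub_le (μ := ν) (ν := μ)))
  simp only [add_apply] at hμ hν
  rw [sub_sub_self_comm] at hμ
  exact (ENNReal.add_right_inj (measure_ne_top _ univ)).1 (hμ.trans (h.trans hν.symm))

lemma IsHahnDecomposition.sub_apply_univ [IsFiniteMeasure μ] [IsFiniteMeasure ν]
    (hs : IsHahnDecomposition μ ν s) : (ν - μ) univ = ν s - μ s := by
  rw [← measure_add_measure_compl hs.measurableSet,
    sub_apply_eq_zero_of_isHahnDecomposition hs.compl, add_zero,
    ← restrict_apply_univ, restrict_sub_eq_restrict_sub_restrict hs.measurableSet,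
    sub_apply MeasurableSet.univ hs.le_on, restrict_apply_univ, restrict_apply_univ]

section Coupling

variable {X : Type*} [MeasurableSpace X]

def normalizedProd (α β : Measure X) : Measure (X × X) :=
  (α univ)⁻¹ • α.prod β

lemma inv_measure_univ_smul_smul (α : Measure X) [IsFiniteMeasure α] :
    (α univ)⁻¹ • α univ • α = α := by
  rcases eq_or_ne (α univ) 0 with h | h
  · simp [measure_univ_eq_zero.mp h]
  · rw [smul_smul, ENNReal.inv_mul_cancel h (measure_ne_top α univ), one_smul]

lemma map_fst_map_diag (ρ : Measure X) : (ρ.map fun x => (x, x)).map Prod.fst = ρ := by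
  rw [Measure.map_map measurable_fst (by fun_prop)]
  exact Measure.map_id

lemma map_snd_map_diag (ρ : Measure X) : (ρ.map fun x => (x, x)).map Prod.snd = ρ := by
  rw [Measure.map_map measurable_snd (by fun_prop)]
  exact Measure.map_id

variable {α β : Measure X}

lemma map_fst_normalizedProd [IsFiniteMeasure α] [SFinite β] (h : α univ = β univ) :
    (normalizedProd α β).map Prod.fst = α := by
  rw [normalizedProd, Measure.map_smul, Measure.map_fst_prod, ← h, inv_measure_univ_smul_smul]

lemma map_snd_normalizedProd [IsFiniteMeasure β] (h : α univ = β univ) :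
    (normalizedProd α β).map Prod.snd = β := by
  rw [normalizedProd, Measure.map_smul, Measure.map_snd_prod, h, inv_measure_univ_smul_smul]

/-- `μ - (μ - ν)` is the common part `μ ⊓ ν` of the two measures. -/
def overlapCoupling (μ ν : Measure X) : Measure (X × X) :=
  (μ - (μ - ν)).map (fun x => (x, x)) + normalizedProd (μ - ν) (ν - μ)

variable {μ ν : Measure X} [IsFiniteMeasure μ] [IsFiniteMeasure ν]

lemma map_fst_overlapCoupling (h : μ univ = ν univ) : (overlapCoupling μ ν).map Prod.fst = μ := by
  rw [overlapCoupling, Measure.map_add _ _ measurable_fst, map_fst_map_diag,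
    map_fst_normalizedProd (sub_apply_univ_comm h)]
  exact sub_add_cancel_of_le sub_le

lemma map_snd_overlapCoupling (h : μ univ = ν univ) : (overlapCoupling μ ν).map Prod.snd = ν := by
  rw [overlapCoupling, Measure.map_add _ _ measurable_snd, map_snd_map_diag,
    map_snd_normalizedProd (sub_apply_univ_comm h), sub_sub_self_comm]
  exact sub_add_cancel_of_le sub_le

end Coupling

section Moments

variable {X : Type*} [MeasurableSpace X] {q : ℝ}

lemma eLpNorm'_map_measure {Y : Type*} [MeasurableSpace Y] {ρ : Measure X} {f : X → Y}
    (hf : Measurable f) {g : Y → ℝ≥0∞} (hg : Measurable g) :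
    eLpNorm' g q (ρ.map f) = eLpNorm' (g ∘ f) q ρ := by
  simp only [eLpNorm', enorm_eq_self, lintegral_map (hg.pow_const q) hf, Function.comp_apply]

variable [PseudoEMetricSpace X] [OpensMeasurableSpace X] [SecondCountableTopology X]

lemma eLpNorm'_edist_le_of_map_fst_of_map_snd {π : Measure (X × X)} {α β : Measure X}
    (hα : π.map Prod.fst = α) (hβ : π.map Prod.snd = β) (hq : 1 ≤ q) (x₀ : X) :
    eLpNorm' (fun p : X × X => edist p.1 p.2) q π ≤
      eLpNorm' (fun x => edist x x₀) q α + eLpNorm' (fun x => edist x x₀) q β := by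
  have hr : Measurable fun x : X => edist x x₀ := measurable_id.edist measurable_const
  calc eLpNorm' (fun p : X × X => edist p.1 p.2) q π
      ≤ eLpNorm' (fun p : X × X => edist p.1 x₀ + edist p.2 x₀) q π :=
        eLpNorm'_mono_enorm_ae (by linarith)
          (ae_of_all _ fun p => by simpa using edist_triangle_right p.1 p.2 x₀)
    _ ≤ eLpNorm' (fun p : X × X => edist p.1 x₀) q π +
          eLpNorm' (fun p : X × X => edist p.2 x₀) q π :=
        eLpNorm'_add_le (hr.comp measurable_fst).aestronglyMeasurable
          (hr.comp measurable_snd).aestronglyMeasurable hq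
    _ = _ := by
        rw [← hα, ← hβ, eLpNorm'_map_measure measurable_fst hr,
          eLpNorm'_map_measure measurable_snd hr]
        rfl

lemma eLpNorm'_edist_overlapCoupling (μ ν : Measure X) (hq : 0 < q) :
    eLpNorm' (fun p : X × X => edist p.1 p.2) q (overlapCoupling μ ν) =
      eLpNorm' (fun p : X × X => edist p.1 p.2) q (normalizedProd (μ - ν) (ν - μ)) := by
  simp only [eLpNorm', enorm_eq_self, overlapCoupling, lintegral_add_measure,
    lintegral_map (measurable_edist.pow_const q) (by fun_prop : Measurable fun x : X => (x, x)),
    edist_self, ENNReal.zero_rpow_of_pos hq, lintegral_zero, zero_add]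

theorem eLpNorm'_edist_overlapCoupling_le {μ ν : Measure X} [IsFiniteMeasure μ]
    [IsFiniteMeasure ν] (h : μ univ = ν univ) {s m : ℝ} (hs : 1 ≤ s) (hsm : s ≤ m) (x₀ : X) :
    eLpNorm' (fun p : X × X => edist p.1 p.2) s (overlapCoupling μ ν) ≤
      (eLpNorm' (fun x => edist x x₀) m μ + eLpNorm' (fun x => edist x x₀) m ν) *
        (μ - ν) univ ^ (1 / s - 1 / m) := by
  have hr : AEStronglyMeasurable (fun x : X => edist x x₀) (μ - ν) :=
    (measurable_id.edist measurable_const).aestronglyMeasurable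
  have hr' : AEStronglyMeasurable (fun x : X => edist x x₀) (ν - μ) :=
    (measurable_id.edist measurable_const).aestronglyMeasurable
  have hc := sub_apply_univ_comm h
  rw [eLpNorm'_edist_overlapCoupling μ ν (by linarith)]
  calc _ ≤ eLpNorm' (fun x => edist x x₀) s (μ - ν) + eLpNorm' (fun x => edist x x₀) s (ν - μ) :=
        eLpNorm'_edist_le_of_map_fst_of_map_snd (map_fst_normalizedProd hc)
          (map_snd_normalizedProd hc) hs x₀
    _ ≤ eLpNorm' (fun x => edist x x₀) m (μ - ν) * (μ - ν) univ ^ (1 / s - 1 / m) +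
          eLpNorm' (fun x => edist x x₀) m (ν - μ) * (ν - μ) univ ^ (1 / s - 1 / m) :=
        add_le_add (eLpNorm'_le_eLpNorm'_mul_rpow_measure_univ (by linarith) hsm hr)
          (eLpNorm'_le_eLpNorm'_mul_rpow_measure_univ (by linarith) hsm hr')
    _ ≤ _ := by
        rw [← hc, add_mul]
        have hm : 0 ≤ m := by linarith
        gcongr <;> exact sub_le

end Moments

section RealValued

variable {X α : Type*} [PseudoMetricSpace X] [MeasurableSpace α] {ρ : Measure α} {f g : α → X}
  {q : ℝ}

lemma lintegral_edist_rpow (hq : 0 ≤ q) :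
    ∫⁻ a, edist (f a) (g a) ^ q ∂ρ = ∫⁻ a, ENNReal.ofReal (dist (f a) (g a) ^ q) ∂ρ := by
  simp_rw [edist_dist, ENNReal.ofReal_rpow_of_nonneg dist_nonneg hq]

lemma toReal_eLpNorm'_edist (hfg : AEStronglyMeasurable (fun a => dist (f a) (g a) ^ q) ρ)
    (hq : 0 ≤ q) :
    (eLpNorm' (fun a => edist (f a) (g a)) q ρ).toReal =
      (∫ a, dist (f a) (g a) ^ q ∂ρ) ^ (1 / q) := by
  rw [eLpNorm', ← ENNReal.toReal_rpow]
  simp only [enorm_eq_self]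
  rw [lintegral_edist_rpow hq, integral_eq_lintegral_of_nonneg_ae
    (ae_of_all _ fun a => by positivity) hfg]

lemma eLpNorm'_edist_eq_ofReal (hfg : Integrable (fun a => dist (f a) (g a) ^ q) ρ)
    (hq : 0 ≤ q) :
    eLpNorm' (fun a => edist (f a) (g a)) q ρ =
      ENNReal.ofReal ((∫ a, dist (f a) (g a) ^ q ∂ρ) ^ (1 / q)) := by
  rw [eLpNorm']
  simp only [enorm_eq_self]
  rw [lintegral_edist_rpow hq, ← ofReal_integral_eq_lintegral_ofReal hfg
    (ae_of_all _ fun a => by positivity), ENNReal.ofReal_rpow_of_nonneg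
    (integral_nonneg fun a => by positivity) (by positivity)]

end RealValued

theorem integral_dist_rpow_overlapCoupling_le {X : Type*} [PseudoMetricSpace X]
    [MeasurableSpace X] [OpensMeasurableSpace X] [SecondCountableTopology X] {μ ν : Measure X}
    [IsFiniteMeasure μ] [IsFiniteMeasure ν] (h : μ univ = ν univ) {s m : ℝ} (hs : 1 ≤ s)
    (hsm : s ≤ m) (x₀ : X) (hμ : Integrable (fun x => dist x x₀ ^ m) μ)
    (hν : Integrable (fun y => dist y x₀ ^ m) ν) :
    (∫ p : X × X, dist p.1 p.2 ^ s ∂(overlapCoupling μ ν)) ^ (1 / s) ≤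
      ((∫ x, dist x x₀ ^ m ∂μ) ^ (1 / m) + (∫ y, dist y x₀ ^ m ∂ν) ^ (1 / m)) *
        ((μ - ν) univ).toReal ^ (1 / s - 1 / m) := by
  have hm : 0 ≤ m := by linarith
  rw [← toReal_eLpNorm'_edist (f := Prod.fst) (g := Prod.snd)
    (by fun_prop : Measurable fun p : X × X => dist p.1 p.2 ^ s).aestronglyMeasurable
    (by linarith)]
  refine ENNReal.toReal_le_of_le_ofReal (by positivity) ?_
  rw [ENNReal.ofReal_mul (by positivity), ENNReal.ofReal_add (by positivity) (by positivity),
    ← eLpNorm'_edist_eq_ofReal (f := fun x => x) (g := fun _ => x₀) hμ hm,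
    ← eLpNorm'_edist_eq_ofReal (f := fun x => x) (g := fun _ => x₀) hν hm,
    ← ENNReal.ofReal_rpow_of_nonneg ENNReal.toReal_nonneg
      (sub_nonneg.2 (one_div_le_one_div_of_le (by linarith) hsm)),
    ENNReal.ofReal_toReal (measure_ne_top _ _)]
  exact eLpNorm'_edist_overlapCoupling_le h hs hsm x₀

end MeasureTheory

section TotalVariation

variable {X : Type} [MeasurableSpace X] (μ ν : Measure X) [IsFiniteMeasure μ] [IsFiniteMeasure ν]

lemma abs_sub_le_tvDist {A : Set X} (hA : MeasurableSet A) :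
    |(μ A).toReal - (ν A).toReal| ≤ tvDist μ ν := by
  refine le_csSup ⟨(μ univ).toReal + (ν univ).toReal, ?_⟩ ⟨A, hA, rfl⟩
  rintro _ ⟨B, -, rfl⟩
  have hμB : (μ B).toReal ≤ (μ univ).toReal :=
    ENNReal.toReal_mono (measure_ne_top μ univ) (measure_mono (subset_univ B))
  have hνB : (ν B).toReal ≤ (ν univ).toReal :=
    ENNReal.toReal_mono (measure_ne_top ν univ) (measure_mono (subset_univ B))
  rw [abs_sub_le_iff]
  constructor <;> linarith [ENNReal.toReal_nonneg (a := μ B), ENNReal.toReal_nonneg (a := ν B)]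

lemma toReal_sub_apply_univ_le_tvDist : ((μ - ν) univ).toReal ≤ tvDist μ ν := by
  obtain ⟨s, hs⟩ := exists_isHahnDecomposition ν μ
  have hle : ν s ≤ μ s := by simpa using hs.le_on univ
  rw [hs.sub_apply_univ, ENNReal.toReal_sub_of_le hle (measure_ne_top μ s)]
  exact (le_abs_self _).trans (abs_sub_le_tvDist μ ν hs.measurableSet)

end TotalVariation

lemma isCoupling_overlapCoupling {X : Type} [MeasurableSpace X] (μ ν : Measure X)
    [IsProbabilityMeasure μ] [IsProbabilityMeasure ν] : IsCoupling μ ν (overlapCoupling μ ν) := by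
  have h : μ univ = ν univ := by simp
  refine ⟨⟨?_⟩, map_fst_overlapCoupling h, map_snd_overlapCoupling h⟩
  rw [← Set.preimage_univ (f := Prod.fst), ← Measure.map_apply measurable_fst MeasurableSet.univ,
    map_fst_overlapCoupling h, measure_univ]

lemma wassersteinDist_le_of_isCoupling {X : Type} [MeasurableSpace X] [PseudoMetricSpace X]
    {s : ℝ} {μ ν : Measure X} {γ : Measure (X × X)} (h : IsCoupling μ ν γ) :
    wassersteinDist s μ ν ≤ (∫ x : X × X, dist x.1 x.2 ^ s ∂γ) ^ (1 / s) := by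
  refine csInf_le ⟨0, ?_⟩ ⟨γ, h, rfl⟩
  rintro _ ⟨γ', -, rfl⟩
  positivity

lemma Real.rpow_add_rpow_le_two_mul_rpow_add {a b q : ℝ} (ha : 0 ≤ a) (hb : 0 ≤ b) (hq : 0 ≤ q) :
    a ^ q + b ^ q ≤ 2 * (a + b) ^ q := by
  have hA : a ^ q ≤ (a + b) ^ q := by gcongr; linarith
  have hB : b ^ q ≤ (a + b) ^ q := by gcongr; linarith
  linarith

/-- **Lemma C.1** (Wasserstein distance bounded via total variation and moments). -/
theorem wasserstein_bounded_by_tv_and_moments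
    {X : Type} [MetricSpace X] [PolishSpace X] [MeasurableSpace X] [BorelSpace X]
    (s m : ℝ) (hs : 1 ≤ s) (hm : s < m) (x₀ : X)
    (μ ν : Measure X) [IsProbabilityMeasure μ] [IsProbabilityMeasure ν]
    (hμmom : Integrable (fun x => dist x x₀ ^ m) μ)
    (hνmom : Integrable (fun y => dist y x₀ ^ m) ν) :
    (∃ γ : Measure (X × X), IsCoupling μ ν γ ∧
      (∫ x : X × X, dist x.1 x.2 ^ s ∂γ) ^ (1 / s) ≤
        (2 : ℝ) ^ (1 + 1 / s) *
          ((∫ x, dist x x₀ ^ m ∂μ) + ∫ y, dist y x₀ ^ m ∂ν) ^ (1 / m) *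
          tvDist μ ν ^ (1 / s - 1 / m)) ∧
    wassersteinDist s μ ν ≤
      (2 : ℝ) ^ (1 + 1 / s) *
        ((∫ x, dist x x₀ ^ m ∂μ) + ∫ y, dist y x₀ ^ m ∂ν) ^ (1 / m) *
        tvDist μ ν ^ (1 / s - 1 / m) := by
  have he : 0 ≤ 1 / s - 1 / m := sub_nonneg.2 (one_div_le_one_div_of_le (by linarith) hm.le)
  have hγ := isCoupling_overlapCoupling μ ν
  have hδ := toReal_sub_apply_univ_le_tvDist μ ν
  have hmoments : (∫ x, dist x x₀ ^ m ∂μ) ^ (1 / m) + (∫ y, dist y x₀ ^ m ∂ν) ^ (1 / m) ≤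
      (2 : ℝ) ^ (1 + 1 / s) * ((∫ x, dist x x₀ ^ m ∂μ) + ∫ y, dist y x₀ ^ m ∂ν) ^ (1 / m) :=
    (Real.rpow_add_rpow_le_two_mul_rpow_add (integral_nonneg fun _ => by positivity)
      (integral_nonneg fun _ => by positivity) (one_div_nonneg.2 (by linarith))).trans
      (by gcongr; exact Real.self_le_rpow_of_one_le one_le_two (by simp; positivity))
  have hbound : (∫ p : X × X, dist p.1 p.2 ^ s ∂(overlapCoupling μ ν)) ^ (1 / s) ≤
      (2 : ℝ) ^ (1 + 1 / s) * ((∫ x, dist x x₀ ^ m ∂μ) + ∫ y, dist y x₀ ^ m ∂ν) ^ (1 / m) *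
        tvDist μ ν ^ (1 / s - 1 / m) :=
    (integral_dist_rpow_overlapCoupling_le (by simp) hs hm.le x₀ hμmom hνmom).trans
      (mul_le_mul hmoments (Real.rpow_le_rpow ENNReal.toReal_nonneg hδ he) (by positivity)
        (by positivity))
  exact ⟨⟨_, hγ, hbound⟩, (wassersteinDist_le_of_isCoupling hγ).trans hbound⟩
end
end

section
/- Proposition C.1 (classical smoothness conditions imply the tempered local-asymptotic-normality remainder bound, i.e., sufficient conditions for (A2)). Let (α_n) be a positive sequence with α_n → 0 and α_n·n → ∞, and fix θ* ∈ ℝ^p. Suppose there is r₀ > 0 such that, P_n-almost surely, θ ↦ log f_n(X^n|θ) is three times continuously differentiable on the closed ball B̄_{θ*}(r₀) := {θ : ‖θ − θ*‖₂ ≤ r₀}, and suppose: (i) there are measurable M̃_n : Ω_n → [0,∞) with sup_n E_{P_n}[M̃_n/n] < ∞ such that |∂³ log f_n(X^n|θ)/∂θ_i ∂θ_j ∂θ_k| < M̃_n for all indices i,j,k and all θ ∈ B̄_{θ*}(r₀); (ii) there exist random vectors Δ_n with Δ_n = O_P(1) and a symmetric positive definite matrix V ∈ ℝ^{p×p} such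 that (1/√n)·∇ log f_n(X^n|θ*) − V·Δ_n → 0 and (1/n)·∇² log f_n(X^n|θ*) + V → 0 in P_n-probability. Then, defining R_n(h) := α_n·[log f_n(X^n|θ* + h/√(α_n n)) − log f_n(X^n|θ*)] − √α_n·hᵀVΔ_n + (1/2)·hᵀVh, for every M > 0, r > 0 and ε > 0 there exists an integer N = N(M,r,ε) such that for all n with α_n·n > N, P_n( sup_{‖h‖₂ ≤ r} |R_n(h)| > M ) < ε. -/
open MeasureTheory Filter BigOperators

noncomputable section

/-!
Write `ℓ = log f_n(X^n | ·)`, `c = √(α_n n)` and `v = h / c`. Along the segment from `θ*` to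
`θ* + v`, Taylor's formula with the third-derivative bound gives
`ℓ(θ* + v) - ℓ(θ*) = ∇ℓ·v + ½ vᵀ∇²ℓ v + T` with `|T| ≤ p³ M̃_n ‖v‖³ / 6`. Multiplying by `α_n`,
the remainder `R_n(h)` splits as
`α_n T + √α_n hᵀ(∇ℓ/√n - VΔ_n) + ½ hᵀ(∇²ℓ/n + V)h`.
The last two terms are uniformly small on `‖h‖ ≤ r` off events of small probability by (ii)
(using `α_n ≤ 1`); the first is at most `p³ r³ (M̃_n/n) / (6c)`, and `M̃_n/n` is bounded in
probability by Markov's inequality while `c → ∞`.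

"Eventually for `α_n n > N`" is eventually along `comap (α_n n) atTop`; this filter refines
`atTop` on `ℕ`, since a real sequence is bounded on finite sets, so the hypotheses stated
along `n → ∞` can be used there.
-/

open Set Metric
open scoped ENNReal

theorem norm_le_mul_pow_of_hasDerivAt {E : Type*} [NormedAddCommGroup E] [NormedSpace ℝ E]
    {ψ ψ' : ℝ → E} {b c : ℝ} (k : ℕ) (hψ : ∀ t ∈ Icc 0 b, HasDerivAt ψ (ψ' t) t)
    (hψ0 : ψ 0 = 0) (hψ' : ∀ t ∈ Ico 0 b, ‖ψ' t‖ ≤ c * t ^ k) :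
    ∀ t ∈ Icc 0 b, ‖ψ t‖ ≤ c * t ^ (k + 1) / (k + 1) := by
  have hB (t : ℝ) : HasDerivAt (fun t => c * t ^ (k + 1) / (k + 1)) (c * t ^ k) t := by
    refine (((hasDerivAt_pow (k + 1) t).const_mul c).div_const _).congr_deriv ?_
    rw [Nat.add_sub_cancel]
    push_cast
    field_simp
  exact image_norm_le_of_norm_deriv_right_le_deriv_boundary
    (fun t ht => (hψ t ht).continuousAt.continuousWithinAt)
    (fun t ht => (hψ t (Ico_subset_Icc_self ht)).hasDerivWithinAt)
    (by simp [hψ0]) hB hψ'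

theorem abs_sub_taylor_two_le {f f₁ f₂ f₃ : ℝ → ℝ} {K : ℝ}
    (hf : ∀ t ∈ Icc (0 : ℝ) 1, HasDerivAt f (f₁ t) t)
    (hf₁ : ∀ t ∈ Icc (0 : ℝ) 1, HasDerivAt f₁ (f₂ t) t)
    (hf₂ : ∀ t ∈ Icc (0 : ℝ) 1, HasDerivAt f₂ (f₃ t) t)
    (hf₃ : ∀ t ∈ Icc (0 : ℝ) 1, |f₃ t| ≤ K) :
    |f 1 - f 0 - f₁ 0 - f₂ 0 / 2| ≤ K / 6 := by
  -- integrate the bound on `f₃` three times, each time against the next Taylor polynomial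
  have h₂ := norm_le_mul_pow_of_hasDerivAt (ψ := fun t => f₂ t - f₂ 0) (c := K) 0
    (fun t ht => (hf₂ t ht).sub_const _) (sub_self _)
    (fun t ht => by simpa using hf₃ t (Ico_subset_Icc_self ht))
  have h₁ := norm_le_mul_pow_of_hasDerivAt (ψ := fun t => f₁ t - f₁ 0 - t * f₂ 0) (c := K) 1
    (fun t ht => by
      simpa using ((hf₁ t ht).sub_const (f₁ 0)).fun_sub ((hasDerivAt_id t).mul_const (f₂ 0)))
    (by simp) (fun t ht => by simpa using h₂ t (Ico_subset_Icc_self ht))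
  have h₀ := norm_le_mul_pow_of_hasDerivAt
    (ψ := fun t => f t - f 0 - t * f₁ 0 - t ^ 2 / 2 * f₂ 0) (c := K / 2) 2
    (fun t ht => by
      convert (((hf t ht).sub_const (f 0)).fun_sub ((hasDerivAt_id t).mul_const (f₁ 0))).fun_sub
        (((hasDerivAt_pow 2 t).div_const 2).mul_const (f₂ 0)) using 1
      simp)
    (by simp) (fun t ht => by
      convert h₁ t (Ico_subset_Icc_self ht) using 1; norm_num; ring)
  have := h₀ 1 (by simp)
  norm_num at this
  convert this using 1 <;> ring_nf

theorem abs_sum_mul_le {ι : Type*} [Fintype ι] {w Y : ι → ℝ} {a b : ℝ}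
    (hw : ∀ i, |w i| ≤ a) (hY : ∀ i, |Y i| ≤ b) :
    |∑ i, w i * Y i| ≤ Fintype.card ι * (a * b) := by
  calc |∑ i, w i * Y i| ≤ ∑ i, |w i * Y i| := Finset.abs_sum_le_sum_abs _ _
    _ ≤ ∑ _i : ι, a * b := Finset.sum_le_sum fun i _ => by
        rw [abs_mul]
        exact mul_le_mul (hw i) (hY i) (abs_nonneg _) ((abs_nonneg _).trans (hw i))
    _ = Fintype.card ι * (a * b) := by simp

section EuclideanTaylor

variable {p : ℕ}

theorem fderiv_apply_eq_sum_basisE (F : EuclideanSpace ℝ (Fin p) → ℝ)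
    (x w : EuclideanSpace ℝ (Fin p)) :
    fderiv ℝ F x w = ∑ i, w i * fderiv ℝ F x (basisE p i) := by
  conv_lhs => rw [← (EuclideanSpace.basisFun (Fin p) ℝ).sum_repr w]
  simp [basisE, smul_eq_mul]

theorem hasDerivAt_comp_add_smul {F : EuclideanSpace ℝ (Fin p) → ℝ}
    {θ v : EuclideanSpace ℝ (Fin p)} {t : ℝ} (hF : DifferentiableAt ℝ F (θ + t • v)) :
    HasDerivAt (fun s => F (θ + s • v)) (∑ i, v i * fderiv ℝ F (θ + t • v) (basisE p i)) t := by
  have hline : HasDerivAt (fun s : ℝ => θ + s • v) v t := by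
    simpa using ((hasDerivAt_id t).smul_const v).const_add θ
  rw [← fderiv_apply_eq_sum_basisE]
  exact hF.hasFDerivAt.comp_hasDerivAt t hline

theorem ContDiffAt.d1 {g : EuclideanSpace ℝ (Fin p) → ℝ} {x : EuclideanSpace ℝ (Fin p)}
    {n : ℕ} (hg : ContDiffAt ℝ (n + 1) g x) (i : Fin p) :
    ContDiffAt ℝ n (fun y => d1 g y i) x :=
  (ContinuousLinearMap.apply ℝ ℝ (basisE p i)).contDiff.contDiffAt.comp x
    (hg.fderiv_right le_rfl)

def taylorRemainder₂ (g : EuclideanSpace ℝ (Fin p) → ℝ) (θ v : EuclideanSpace ℝ (Fin p)) : ℝ :=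
  g (θ + v) - g θ - ∑ i, v i * d1 g θ i - (∑ i, ∑ j, v i * v j * d2 g θ i j) / 2

theorem abs_taylorRemainder₂_le {g : EuclideanSpace ℝ (Fin p) → ℝ}
    {θ v : EuclideanSpace ℝ (Fin p)} {r₀ Mb : ℝ} (hv : ‖v‖ < r₀)
    (hg : ContDiffOn ℝ 3 g (closedBall θ r₀))
    (hd3 : ∀ x ∈ closedBall θ r₀, ∀ i j k, |d3 g x i j k| ≤ Mb) :
    |taylorRemainder₂ g θ v| ≤ p ^ 3 * ‖v‖ ^ 3 * Mb / 6 := by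
  have hseg : ∀ t ∈ Icc (0 : ℝ) 1, θ + t • v ∈ ball θ r₀ := fun t ht => by
    rw [mem_ball, dist_self_add_left, norm_smul, Real.norm_of_nonneg ht.1]
    exact (mul_le_of_le_one_left (norm_nonneg v) ht.2).trans_lt hv
  have hg3 : ∀ t ∈ Icc (0 : ℝ) 1, ContDiffAt ℝ 3 g (θ + t • v) := fun t ht =>
    hg.contDiffAt (mem_of_superset (isOpen_ball.mem_nhds (hseg t ht)) ball_subset_closedBall)
  have hcoord : ∀ i, |v i| ≤ ‖v‖ := fun i => by
    simpa using PiLp.norm_apply_le v i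
  have key := abs_sub_taylor_two_le (K := p ^ 3 * ‖v‖ ^ 3 * Mb)
    (f := fun t => g (θ + t • v))
    (f₁ := fun t => ∑ j, v j * d1 g (θ + t • v) j)
    (f₂ := fun t => ∑ j, v j * ∑ i, v i * d2 g (θ + t • v) i j)
    (f₃ := fun t => ∑ k, v k * ∑ j, v j * ∑ i, v i * d3 g (θ + t • v) i j k)
    (fun t ht => hasDerivAt_comp_add_smul ((hg3 t ht).differentiableAt (by norm_num)))
    (fun t ht => HasDerivAt.fun_sum fun j _ => (hasDerivAt_comp_add_smul
      (((hg3 t ht).d1 j).differentiableAt (by norm_num))).const_mul (v j))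
    (fun t ht => HasDerivAt.fun_sum fun k _ => HasDerivAt.const_mul (v k) <|
      HasDerivAt.fun_sum fun j _ => (hasDerivAt_comp_add_smul
        ((((hg3 t ht).d1 k).d1 j).differentiableAt (by norm_num))).const_mul (v j))
    (fun t ht => by
      have hx := ball_subset_closedBall (hseg t ht)
      convert abs_sum_mul_le hcoord fun k => abs_sum_mul_le hcoord fun j =>
        abs_sum_mul_le hcoord fun i => hd3 _ hx i j k using 1
      simp only [Fintype.card_fin]
      ring)
  have hd2 : ∑ j, v j * ∑ i, v i * d2 g θ i j = ∑ i, ∑ j, v i * v j * d2 g θ i j := by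
    rw [Finset.sum_comm]
    simp only [Finset.mul_sum]
    exact Finset.sum_congr rfl fun j _ => Finset.sum_congr rfl fun i _ => by ring
  simpa [taylorRemainder₂, hd2] using key

theorem tempered_remainder_eq (g : EuclideanSpace ℝ (Fin p) → ℝ)
    (θ Δ h : EuclideanSpace ℝ (Fin p)) (V : Matrix (Fin p) (Fin p) ℝ) {α n : ℝ}
    (hα : 0 < α) (hn : 0 < n) :
    α * (g (θ + (√(α * n))⁻¹ • h) - g θ) - √α * ∑ i, ∑ j, h i * V i j * Δ j
        + 1 / 2 * ∑ i, ∑ j, h i * V i j * h j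
      = α * taylorRemainder₂ g θ ((√(α * n))⁻¹ • h)
        + √α * ∑ i, h i * ((√n)⁻¹ * d1 g θ i - ∑ j, V i j * Δ j)
        + 1 / 2 * ∑ i, h i * ∑ j, h j * (n⁻¹ * d2 g θ i j + V i j) := by
  have hc₁ : α * (√(α * n))⁻¹ = √α * (√n)⁻¹ := by
    rw [Real.sqrt_mul hα.le, mul_inv, ← mul_assoc]
    congr 1
    field_simp
    rw [Real.sq_sqrt hα.le]
  have hc₂ : α * ((√(α * n))⁻¹ * (√(α * n))⁻¹) = n⁻¹ := by
    rw [← mul_inv, Real.mul_self_sqrt (by positivity)]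
    field_simp
  have hgrad : α * ∑ i, (√(α * n))⁻¹ * h i * d1 g θ i - √α * ∑ i, ∑ j, h i * V i j * Δ j
      = √α * ∑ i, h i * ((√n)⁻¹ * d1 g θ i - ∑ j, V i j * Δ j) := by
    simp only [Finset.mul_sum, mul_sub, Finset.sum_sub_distrib]
    congr 1
    · exact Finset.sum_congr rfl fun i _ => by linear_combination (h i * d1 g θ i) * hc₁
    · exact Finset.sum_congr rfl fun i _ => Finset.sum_congr rfl fun j _ => by ring
  have hhess : α * (∑ i, ∑ j, (√(α * n))⁻¹ * h i * ((√(α * n))⁻¹ * h j) * d2 g θ i j) / 2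
        + 1 / 2 * ∑ i, ∑ j, h i * V i j * h j
      = 1 / 2 * ∑ i, h i * ∑ j, h j * (n⁻¹ * d2 g θ i j + V i j) := by
    simp only [Finset.mul_sum, Finset.sum_div, ← Finset.sum_add_distrib]
    exact Finset.sum_congr rfl fun i _ => Finset.sum_congr rfl fun j _ => by
      linear_combination (h i * h j * d2 g θ i j / 2) * hc₂
  simp only [taylorRemainder₂, PiLp.smul_apply, smul_eq_mul]
  linear_combination hgrad + hhess

theorem abs_tempered_remainder_le {g : EuclideanSpace ℝ (Fin p) → ℝ}
    {θ Δ h : EuclideanSpace ℝ (Fin p)} {V : Matrix (Fin p) (Fin p) ℝ}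
    {α n r r₀ Mb δ₁ δ₂ : ℝ} (hα : 0 < α) (hα₁ : α ≤ 1) (hn : 0 < n) (hMb : 0 ≤ Mb)
    (hg : ContDiffOn ℝ 3 g (closedBall θ r₀))
    (hd3 : ∀ x ∈ closedBall θ r₀, ∀ i j k, |d3 g x i j k| ≤ Mb)
    (hgrad : ∀ i, |(√n)⁻¹ * d1 g θ i - ∑ j, V i j * Δ j| ≤ δ₁)
    (hhess : ∀ i j, |n⁻¹ * d2 g θ i j + V i j| ≤ δ₂)
    (hh : ‖h‖ ≤ r) (hr : r < √(α * n) * r₀) :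
    |α * (g (θ + (√(α * n))⁻¹ • h) - g θ) - √α * ∑ i, ∑ j, h i * V i j * Δ j
        + 1 / 2 * ∑ i, ∑ j, h i * V i j * h j|
      ≤ p ^ 3 * r ^ 3 * (Mb / n) / (6 * √(α * n)) + p * r * δ₁
        + p ^ 2 * r ^ 2 / 2 * δ₂ := by
  set c := √(α * n) with hc_def
  have hc : 0 < c := Real.sqrt_pos.mpr (mul_pos hα hn)
  have hcoord : ∀ i, |h i| ≤ r := fun i => by simpa using (PiLp.norm_apply_le h i).trans hh
  have hv : ‖c⁻¹ • h‖ ≤ r / c := by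
    rw [norm_smul, Real.norm_of_nonneg (inv_nonneg.mpr hc.le), inv_mul_eq_div]
    gcongr
  have hT : α * |taylorRemainder₂ g θ (c⁻¹ • h)| ≤ p ^ 3 * r ^ 3 * (Mb / n) / (6 * c) := by
    have hα_eq : α = c ^ 2 / n := by rw [hc_def, Real.sq_sqrt (by positivity)]; field_simp
    calc α * |taylorRemainder₂ g θ (c⁻¹ • h)| ≤ α * (p ^ 3 * (r / c) ^ 3 * Mb / 6) := by
          gcongr
          refine (abs_taylorRemainder₂_le (hv.trans_lt ?_) hg hd3).trans (by gcongr)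
          rwa [div_lt_iff₀' hc]
      _ = p ^ 3 * r ^ 3 * (Mb / n) / (6 * c) := by rw [hα_eq]; field_simp
  have hG : |√α * ∑ i, h i * ((√n)⁻¹ * d1 g θ i - ∑ j, V i j * Δ j)| ≤ p * r * δ₁ := by
    rw [abs_mul, abs_of_nonneg (Real.sqrt_nonneg _)]
    refine (mul_le_of_le_one_left (abs_nonneg _) (Real.sqrt_le_one.mpr hα₁)).trans ?_
    simpa [mul_assoc] using abs_sum_mul_le hcoord hgrad
  have hH : |1 / 2 * ∑ i, h i * ∑ j, h j * (n⁻¹ * d2 g θ i j + V i j)|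
      ≤ p ^ 2 * r ^ 2 / 2 * δ₂ := by
    have := abs_sum_mul_le hcoord fun i => abs_sum_mul_le hcoord (hhess i)
    rw [abs_mul, abs_of_pos one_half_pos]
    simp only [Fintype.card_fin] at this
    nlinarith
  rw [tempered_remainder_eq g θ Δ h V hα hn]
  calc _ ≤ |α * taylorRemainder₂ g θ (c⁻¹ • h)|
          + |√α * ∑ i, h i * ((√n)⁻¹ * d1 g θ i - ∑ j, V i j * Δ j)|
          + |1 / 2 * ∑ i, h i * ∑ j, h j * (n⁻¹ * d2 g θ i j + V i j)| := abs_add_three _ _ _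
    _ ≤ _ := by
      rw [abs_mul, abs_of_pos hα]
      gcongr

theorem tempered_remainder_large_ae_subset {X : Type*} [MeasurableSpace X] {μ : Measure X}
    {ℓ : X → EuclideanSpace ℝ (Fin p) → ℝ} {Δ : X → EuclideanSpace ℝ (Fin p)} {Mt : X → ℝ}
    {θ : EuclideanSpace ℝ (Fin p)} {V : Matrix (Fin p) (Fin p) ℝ} {α n r r₀ M δ₁ δ₂ K : ℝ}
    (hα : 0 < α) (hα₁ : α ≤ 1) (hn : 0 < n) (hMt : ∀ ω, 0 ≤ Mt ω)
    (hsmooth : ∀ᵐ ω ∂μ, ContDiffOn ℝ 3 (ℓ ω) (closedBall θ r₀))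
    (hbound : ∀ᵐ ω ∂μ, ∀ x ∈ closedBall θ r₀, ∀ i j k, |d3 (ℓ ω) x i j k| < Mt ω)
    (hr : r < √(α * n) * r₀)
    (hM : p ^ 3 * r ^ 3 * K / 6 / √(α * n) + p * r * δ₁ + p ^ 2 * r ^ 2 / 2 * δ₂ ≤ M) :
    ({ω | ∃ h : EuclideanSpace ℝ (Fin p), ‖h‖ ≤ r ∧
        M < |α * (ℓ ω (θ + (√(α * n))⁻¹ • h) - ℓ ω θ) - √α * ∑ i, ∑ j, h i * V i j * Δ ω j
          + 1 / 2 * ∑ i, ∑ j, h i * V i j * h j|} : Set X)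
      ≤ᵐ[μ] (({ω | δ₁ < ‖(WithLp.equiv 2 (Fin p → ℝ)).symm
          (fun i => (√n)⁻¹ * d1 (ℓ ω) θ i - ∑ j, V i j * Δ ω j)‖}
        ∪ ⋃ ij : Fin p × Fin p, {ω | δ₂ < ‖n⁻¹ * d2 (ℓ ω) θ ij.1 ij.2 + V ij.1 ij.2‖})
        ∪ {ω | K < Mt ω / n} : Set X) := by
  filter_upwards [hsmooth, hbound] with ω hsm hbd
  rintro ⟨h, hh, hMh⟩
  show ω ∈ (_ : Set X)
  by_contra hω
  simp only [mem_union, mem_iUnion, mem_ofPred_eq, not_or, not_exists, not_lt] at hω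
  obtain ⟨⟨hgrad, hhess⟩, hMtK⟩ := hω
  refine hMh.not_ge ((abs_tempered_remainder_le hα hα₁ hn (hMt ω) hsm
    (fun x hx i j k => (hbd x hx i j k).le)
    (fun i => by simpa using (PiLp.norm_apply_le _ i).trans hgrad)
    (fun i j => by simpa using hhess (i, j)) hh hr).trans (le_trans ?_ hM))
  rw [div_div _ 6]
  gcongr
  exact mul_nonneg (by positivity) (pow_nonneg ((norm_nonneg h).trans hh) 3)

end EuclideanTaylor

theorem measure_lt_le_ofReal_integral_div {X : Type*} [MeasurableSpace X] {μ : Measure X}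
    {f : X → ℝ} (hf : 0 ≤ᵐ[μ] f) (hfi : Integrable f μ) {K : ℝ} (hK : 0 < K) :
    μ {x | K < f x} ≤ ENNReal.ofReal ((∫ x, f x ∂μ) / K) :=
  calc μ {x | K < f x} ≤ μ {x | K ≤ f x} :=
        measure_mono <| ofPred_subset_ofPred.mpr fun _ => le_of_lt
    _ = ENNReal.ofReal (μ.real {x | K ≤ f x}) :=
        (ofReal_measureReal (hfi.measure_ge_lt_top hK).ne).symm
    _ ≤ _ := ENNReal.ofReal_le_ofReal <|
        (le_div_iff₀' hK).mpr (mul_meas_ge_le_integral_of_nonneg hf hfi K)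

theorem measure_le_add_sum_add_ofReal_integral_div {X ι : Type*} [MeasurableSpace X] [Fintype ι]
    {μ : Measure X} {S G : Set X} {H : ι → Set X} {f : X → ℝ} {K : ℝ}
    (hf : 0 ≤ᵐ[μ] f) (hfi : Integrable f μ) (hK : 0 < K)
    (hS : S ≤ᵐ[μ] ((G ∪ ⋃ i, H i) ∪ {x | K < f x} : Set X)) :
    μ S ≤ μ G + ∑ i, μ (H i) + ENNReal.ofReal ((∫ x, f x ∂μ) / K) :=
  calc μ S ≤ μ ((G ∪ ⋃ i, H i) ∪ {x | K < f x}) := measure_mono_ae hS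
    _ ≤ μ G + ∑ i, μ (H i) + μ {x | K < f x} :=
        (measure_union_le _ _).trans <| add_le_add ((measure_union_le _ _).trans
          (add_le_add le_rfl (measure_iUnion_fintype_le _ _))) le_rfl
    _ ≤ _ := add_le_add le_rfl (measure_lt_le_ofReal_integral_div hf hfi hK)

theorem Filter.comap_atTop_le_cofinite {α β : Type*} [Preorder β] [NoMaxOrder β] (u : α → β) :
    comap u atTop ≤ cofinite := by
  refine le_cofinite_iff_eventually_ne.mpr fun a => ?_
  filter_upwards [tendsto_comap.eventually_gt_atTop (u a)] with b hb
  rintro rfl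
  exact lt_irrefl _ hb

theorem exists_nat_forall_of_eventually_comap {α : Type*} {u : α → ℝ} {Q : α → Prop}
    (hQ : ∀ᶠ a in comap u atTop, Q a) : ∃ N : ℕ, ∀ a, (N : ℝ) < u a → Q a := by
  obtain ⟨s, hs, hsQ⟩ := mem_comap.mp hQ
  obtain ⟨x, hx⟩ := mem_atTop_sets.mp hs
  exact ⟨⌈x⌉₊, fun a ha => hsQ (hx _ ((Nat.le_ceil x).trans ha.le))⟩

theorem sufficient_conditions_for_A2_general
    {p : ℕ} {Ω : ℕ → Type} [∀ n, MeasurableSpace (Ω n)]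
    (P : ∀ n, Measure (Ω n))
    (L : ∀ n, Ω n → EuclideanSpace ℝ (Fin p) → ℝ)
    (θstar : EuclideanSpace ℝ (Fin p))
    (V : Matrix (Fin p) (Fin p) ℝ)
    (Δ : ∀ n, Ω n → EuclideanSpace ℝ (Fin p))
    (α : ℕ → ℝ) (r₀ : ℝ)
    -- tempering sequence: `α n → 0` and `α n * n → ∞`
    (hαpos : ∀ n, 0 < α n)
    (hα0 : Tendsto α atTop (nhds 0))
    -- the log-likelihood is a.s. three times continuously differentiable near `θstar`
    (hr₀ : 0 < r₀)
    (hsmooth : ∀ n, ∀ᵐ ω ∂ P n,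
      ContDiffOn ℝ 3 (fun θ => Real.log (L n ω θ)) (Metric.closedBall θstar r₀))
    -- (i) third derivatives are dominated by `M̃ n` with `sup_n E[M̃ n / n] < ∞`
    (Mt : ∀ n, Ω n → ℝ)
    (hMtnn : ∀ n ω, 0 ≤ Mt n ω)
    (hMtint : ∀ n, Integrable (fun ω => Mt n ω / (n : ℝ)) (P n))
    (hMtE : ∃ C : ℝ, ∀ n, (∫ ω, Mt n ω / (n : ℝ) ∂ P n) ≤ C)
    (hbound : ∀ n, ∀ᵐ ω ∂ P n, ∀ θ ∈ Metric.closedBall θstar r₀, ∀ i j k : Fin p,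
      |d3 (fun θ' => Real.log (L n ω θ')) θ i j k| < Mt n ω)
    -- (ii) first- and second-order expansions at `θstar`
    (hgrad : TendstoInProb P (fun n ω =>
        (WithLp.equiv 2 (Fin p → ℝ)).symm (fun i =>
          (Real.sqrt n)⁻¹ * d1 (fun θ => Real.log (L n ω θ)) θstar i -
            ∑ j, V i j * Δ n ω j))
      (0 : EuclideanSpace ℝ (Fin p)))
    (hhess : ∀ i j : Fin p, TendstoInProb P
        (fun n ω => (n : ℝ)⁻¹ * d2 (fun θ => Real.log (L n ω θ)) θstar i j + V i j)
      (0 : ℝ)) :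
    ∀ M : ℝ, 0 < M → ∀ r : ℝ, 0 < r → ∀ ε : ℝ, 0 < ε →
      ∃ N : ℕ, ∀ n : ℕ, (N : ℝ) < α n * n →
        P n {ω | ∃ h : EuclideanSpace ℝ (Fin p), ‖h‖ ≤ r ∧
          M < |α n * (Real.log (L n ω (θstar + (Real.sqrt (α n * (n : ℝ)))⁻¹ • h)) -
                  Real.log (L n ω θstar))
              - Real.sqrt (α n) * ∑ i, ∑ j, h i * V i j * Δ n ω j
              + (1 / 2) * ∑ i, ∑ j, h i * V i j * h j|} < ENNReal.ofReal ε := by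
  intro M hM r hr ε hε
  simp only [TendstoInProb, sub_zero] at hgrad hhess
  obtain ⟨C, hC⟩ := hMtE
  obtain ⟨δ₁, hδ₁, hδ₁M⟩ := exists_pos_mul_lt (by positivity : (0 : ℝ) < M / 3) (p * r)
  obtain ⟨δ₂, hδ₂, hδ₂M⟩ := exists_pos_mul_lt (by positivity : (0 : ℝ) < M / 3) (p ^ 2 * r ^ 2 / 2)
  obtain ⟨κ, hκ, hCκ⟩ := exists_pos_mul_lt (half_pos hε) C
  have hF : comap (fun n : ℕ => α n * n) atTop ≤ atTop :=
    Nat.cofinite_eq_atTop ▸ comap_atTop_le_cofinite _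
  have hscale : Tendsto (fun n : ℕ => √(α n * n)) (comap (fun n : ℕ => α n * n) atTop) atTop :=
    Real.tendsto_sqrt_atTop.comp tendsto_comap
  refine exists_nat_forall_of_eventually_comap ?_
  filter_upwards [hF (hα0.eventually_le_const zero_lt_one), hF (eventually_gt_atTop 0),
    hscale.eventually_gt_atTop (r / r₀),
    ((tendsto_const_nhds (x := (p : ℝ) ^ 3 * r ^ 3 * κ⁻¹ / 6)).div_atTop hscale).eventually_lt_const
      (by positivity : (0 : ℝ) < M / 3),
    (((hgrad δ₁ hδ₁).add (tendsto_finsetSum _ fun (ij : Fin p × Fin p) _ =>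
      hhess ij.1 ij.2 δ₂ hδ₂)).mono_left hF).eventually_lt_const
      (show (0 : ℝ≥0∞) + ∑ _ij : Fin p × Fin p, 0 < ENNReal.ofReal (ε / 2) by simpa using hε)]
    with n hα₁ hn hr₀n hκn hPn
  calc _ ≤ _ := measure_le_add_sum_add_ofReal_integral_div
        (ae_of_all _ fun ω => div_nonneg (hMtnn n ω) n.cast_nonneg) (hMtint n) (inv_pos.mpr hκ)
        (tempered_remainder_large_ae_subset (δ₁ := δ₁) (δ₂ := δ₂) (hαpos n) hα₁
          (Nat.cast_pos.mpr hn) (hMtnn n) (hsmooth n) (hbound n) ((div_lt_iff₀ hr₀).mp hr₀n)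
          (by linarith))
    _ < ENNReal.ofReal (ε / 2) + ENNReal.ofReal (ε / 2) :=
        ENNReal.add_lt_add_of_lt_of_le ENNReal.ofReal_ne_top hPn <|
          ENNReal.ofReal_le_ofReal (by rw [div_inv_eq_mul]; nlinarith [hC n])
    _ = ENNReal.ofReal ε := by rw [← ENNReal.ofReal_add (by positivity) (by positivity), add_halves]

/-- **Proposition C.1** (classical smoothness conditions imply the tempered
local-asymptotic-normality remainder bound, i.e., sufficient conditions for (A2)). -/
theorem sufficient_conditions_for_A2
    {p : ℕ} {Ω : ℕ → Type} [∀ n, MeasurableSpace (Ω n)]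
    (P : ∀ n, Measure (Ω n)) [∀ n, IsProbabilityMeasure (P n)]
    (L : ∀ n, Ω n → EuclideanSpace ℝ (Fin p) → ℝ)
    (θstar : EuclideanSpace ℝ (Fin p))
    (V : Matrix (Fin p) (Fin p) ℝ)
    (Δ : ∀ n, Ω n → EuclideanSpace ℝ (Fin p))
    (α : ℕ → ℝ) (r₀ : ℝ)
    (hLmeas : ∀ n, Measurable (Function.uncurry (L n)))
    (hLpos : ∀ n ω θ, 0 < L n ω θ)
    (hΔmeas : ∀ n, Measurable (Δ n))
    -- tempering sequence: `α n → 0` and `α n * n → ∞`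
    (hαpos : ∀ n, 0 < α n)
    (hα0 : Tendsto α atTop (nhds 0))
    (hαn : Tendsto (fun n => α n * (n : ℝ)) atTop atTop)
    -- the log-likelihood is a.s. three times continuously differentiable near `θstar`
    (hr₀ : 0 < r₀)
    (hsmooth : ∀ n, ∀ᵐ ω ∂ P n,
      ContDiffOn ℝ 3 (fun θ => Real.log (L n ω θ)) (Metric.closedBall θstar r₀))
    -- (i) third derivatives are dominated by `M̃ n` with `sup_n E[M̃ n / n] < ∞`
    (Mt : ∀ n, Ω n → ℝ)
    (hMtmeas : ∀ n, Measurable (Mt n))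
    (hMtnn : ∀ n ω, 0 ≤ Mt n ω)
    (hMtint : ∀ n, Integrable (fun ω => Mt n ω / (n : ℝ)) (P n))
    (hMtE : ∃ C : ℝ, ∀ n, (∫ ω, Mt n ω / (n : ℝ) ∂ P n) ≤ C)
    (hbound : ∀ n, ∀ᵐ ω ∂ P n, ∀ θ ∈ Metric.closedBall θstar r₀, ∀ i j k : Fin p,
      |d3 (fun θ' => Real.log (L n ω θ')) θ i j k| < Mt n ω)
    -- (ii) first- and second-order expansions at `θstar`
    (hΔOP : ∀ ε : ℝ, 0 < ε → ∃ M : ℝ, 0 < M ∧ ∃ N : ℕ, ∀ n ≥ N,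
      P n {ω | M < ‖Δ n ω‖} < ENNReal.ofReal ε)
    (hV : V.IsSymm ∧ V.PosDef)
    (hgrad : TendstoInProb P (fun n ω =>
        (WithLp.equiv 2 (Fin p → ℝ)).symm (fun i =>
          (Real.sqrt n)⁻¹ * d1 (fun θ => Real.log (L n ω θ)) θstar i -
            ∑ j, V i j * Δ n ω j))
      (0 : EuclideanSpace ℝ (Fin p)))
    (hhess : ∀ i j : Fin p, TendstoInProb P
        (fun n ω => (n : ℝ)⁻¹ * d2 (fun θ => Real.log (L n ω θ)) θstar i j + V i j)
      (0 : ℝ)) :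
    ∀ M : ℝ, 0 < M → ∀ r : ℝ, 0 < r → ∀ ε : ℝ, 0 < ε →
      ∃ N : ℕ, ∀ n : ℕ, (N : ℝ) < α n * n →
        P n {ω | ∃ h : EuclideanSpace ℝ (Fin p), ‖h‖ ≤ r ∧
          M < |α n * (Real.log (L n ω (θstar + (Real.sqrt (α n * (n : ℝ)))⁻¹ • h)) -
                  Real.log (L n ω θstar))
              - Real.sqrt (α n) * ∑ i, ∑ j, h i * V i j * Δ n ω j
              + (1 / 2) * ∑ i, ∑ j, h i * V i j * h j|} < ENNReal.ofReal ε :=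
  sufficient_conditions_for_A2_general P L θstar V Δ α r₀ hαpos hα0 hr₀ hsmooth Mt hMtnn hMtint hMtE
    hbound hgrad hhess
end
end
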